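/- Let n, k ≥ 1, I_{n,n} = diag(1ₙ,−1ₙ), S = [[0,1ₙ],[1ₙ,0]], and J_k = [[0,1_k],[−1_k,0]]. Define μ : Mat_{2n×k}(ℂ) → Mat_{2n}(ℂ) by μ(v) = −(i/2)(v v* I_{n,n} − S (v v* I_{n,n})ᵀ S). Then: (a) μ(v)* I_{n,n} + I_{n,n} μ(v) = 0 and μ(v)ᵀ S + S μ(v) = 0 for all v (μ takes values in o*(2n)); (b) μ(g v) = g μ(v) g⁻¹ for every g with g* I_{n,n} g = I_{n,n} and gᵀ S g = S; (c) writing v = (v′; v″) with v′, v″ ∈ Mat_{n×k}(ℂ) and v₊ = [v′, conj(v″)] ∈ Mat_{n×2k}(ℂ), one has μ(v) = −(i/2)·[[v₊ v₊*, −v₊ J_k v₊ᵀ],[−conj(v₊) J_k v₊*, −conj(v₊) v₊ᵀ]], and this block matrix is unchanged when v₊ is replaced by v₊ H for any H ∈ Mat_{2k}(ℂ) with Hᵀ J_k H = J_k and H* H = 1_{2k} (Sp(k)-invariance). -/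

import Mathlib

open Matrix

/-- The matrix `I_{n,n} = diag(1ₙ, −1ₙ)`. -/
noncomputable def Inn (n : ℕ) : Matrix (Fin n ⊕ Fin n) (Fin n ⊕ Fin n) ℂ :=
  Matrix.fromBlocks 1 0 0 (-1)

/-- The matrix `S = [[0,1ₙ],[1ₙ,0]]`. -/
noncomputable def Smat (n : ℕ) : Matrix (Fin n ⊕ Fin n) (Fin n ⊕ Fin n) ℂ :=
  Matrix.fromBlocks 0 1 1 0

/-- The matrix `J_k = [[0,1_k],[−1_k,0]]`. -/
noncomputable def Jk (k : ℕ) : Matrix (Fin k ⊕ Fin k) (Fin k ⊕ Fin k) ℂ :=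
  Matrix.fromBlocks 0 1 (-1) 0

/-- The moment map `μ(v) = −(i/2)(v v* I_{n,n} − S (v v* I_{n,n})ᵀ S)` on
`W^k = Mat_{2n×k}(ℂ)`. -/
noncomputable def momentOstarK (n k : ℕ) (v : Matrix (Fin n ⊕ Fin n) (Fin k) ℂ) :
    Matrix (Fin n ⊕ Fin n) (Fin n ⊕ Fin n) ℂ :=
  (-(Complex.I / 2)) •
    (v * vᴴ * Inn n - Smat n * (v * vᴴ * Inn n)ᵀ * Smat n)

/-- For `v = (v′; v″)` with `v′, v″ ∈ Mat_{n×k}(ℂ)`, the matrix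
`v₊ = [v′, conj(v″)] ∈ Mat_{n×2k}(ℂ)`. -/
noncomputable def vPlusK (n k : ℕ) (v : Matrix (Fin n ⊕ Fin n) (Fin k) ℂ) :
    Matrix (Fin n) (Fin k ⊕ Fin k) ℂ :=
  Matrix.of fun i c =>
    Sum.elim (fun a => v (Sum.inl i) a) (fun a => starRingEnd ℂ (v (Sum.inr i) a)) c

/-- The block matrix `−(i/2)·[[M M*, −M J_k Mᵀ],[−conj(M) J_k M*, −conj(M) Mᵀ]]`. -/
noncomputable def blockMomentK (n k : ℕ) (M : Matrix (Fin n) (Fin k ⊕ Fin k) ℂ) :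
    Matrix (Fin n ⊕ Fin n) (Fin n ⊕ Fin n) ℂ :=
  (-(Complex.I / 2)) •
    Matrix.fromBlocks (M * Mᴴ) (-(M * Jk k * Mᵀ))
      (-(M.map (starRingEnd ℂ) * Jk k * Mᴴ)) (-(M.map (starRingEnd ℂ) * Mᵀ))

/-!
Write `μ(v) = c • (A - S Aᵀ S)` with `A = v v* I_{n,n}` and `c = -i/2`. The matrix `A` is
`I_{n,n}`-hermitian, and since `I_{n,n}` anticommutes with `S` so is `A - S Aᵀ S`; as `c` is purely
imaginary this gives the first relation of (a). The second relation holds for `A - S Aᵀ S` for any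
`A`, because `S² = 1`. For `g ∈ O*(2n)` one has `g⁻¹ = I_{n,n} g* I_{n,n} = S gᵀ S`, so
`A(g v) = g A(v) g⁻¹` and `A ↦ S Aᵀ S` commutes with conjugation by `g`, which is (b). The block
formula of (c) is an entrywise computation, and the `Sp(k)`-invariance follows from `H H* = 1` and
`H J_k Hᵀ = J_k`, the latter because the symplectic group is closed under transposition.
-/

namespace Matrix

variable {m R : Type*} [Fintype m] [DecidableEq m] [CommRing R]

theorem inv_eq_of_mul_mul_eq_self {g g' Q : Matrix m m R} (hQ : Q * Q = 1)
    (h : g' * Q * g = Q) : g⁻¹ = Q * g' * Q :=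
  inv_eq_left_inv <| by simp only [Matrix.mul_assoc] at h ⊢; rw [h, hQ]

theorem mul_transpose_conj_mul {S g : Matrix m m R} (hSt : Sᵀ = S) (hS : S * S = 1)
    (hg : gᵀ * S * g = S) (A : Matrix m m R) :
    S * (g * A * g⁻¹)ᵀ * S = g * (S * Aᵀ * S) * g⁻¹ := by
  rw [inv_eq_of_mul_mul_eq_self hS hg]
  simp only [transpose_mul, hSt, transpose_transpose, Matrix.mul_assoc]
  simp only [← Matrix.mul_assoc S S, hS, Matrix.one_mul]

theorem transpose_mul_add_mul_eq_zero {S : Matrix m m R} (hSt : Sᵀ = S) (hS : S * S = 1)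
    (A : Matrix m m R) :
    (A - S * Aᵀ * S)ᵀ * S + S * (A - S * Aᵀ * S) = 0 := by
  simp only [transpose_sub, transpose_mul, hSt, transpose_transpose, sub_mul, mul_sub,
    Matrix.mul_assoc, hS, Matrix.mul_one]
  rw [← Matrix.mul_assoc S S, hS, Matrix.one_mul]
  abel

theorem conjTranspose_sub_mul_eq_mul_sub [StarRing R] {I S A : Matrix m m R} (hIt : Iᵀ = I)
    (hSh : Sᴴ = S) (hI : I * I = 1) (hIS : I * S = -(S * I)) (hA : Aᴴ * I = I * A) :
    (A - S * Aᵀ * S)ᴴ * I = I * (A - S * Aᵀ * S) := by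
  have hAt : Aᵀᴴ = I * Aᵀ * I := by
    have := congrArg transpose hA
    rw [transpose_mul, transpose_mul, hIt] at this
    rw [conjTranspose_transpose_eq_transpose_conjTranspose, ← Matrix.one_mul Aᴴᵀ, ← hI,
      Matrix.mul_assoc, this, Matrix.mul_assoc]
  have hSI : S * I = -(I * S) := by rw [hIS, neg_neg]
  calc (A - S * Aᵀ * S)ᴴ * I = Aᴴ * I - S * I * Aᵀ * (I * S * I) := by
        simp only [conjTranspose_sub, conjTranspose_mul, hSh, hAt, sub_mul, Matrix.mul_assoc]
    _ = I * A - I * S * Aᵀ * S := by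
        rw [hA, hIS, Matrix.neg_mul, Matrix.mul_assoc S I I, hI, Matrix.mul_one, hSI]
        noncomm_ring
    _ = I * (A - S * Aᵀ * S) := by noncomm_ring

theorem conjTranspose_map_starRingEnd {p q α : Type*} [CommSemiring α] [StarRing α]
    (A : Matrix p q α) : Aᴴ.map (starRingEnd α) = Aᵀ := by
  ext; simp [starRingEnd_apply]

theorem transpose_map_starRingEnd {p q α : Type*} [CommSemiring α] [StarRing α]
    (A : Matrix p q α) : Aᵀ.map (starRingEnd α) = Aᴴ :=
  rfl

end Matrix

section Blocks

variable (n k : ℕ)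

theorem Inn_mul_Inn : Inn n * Inn n = 1 := by
  simp [Inn, fromBlocks_multiply, ← fromBlocks_one]

theorem Smat_mul_Smat : Smat n * Smat n = 1 := by
  simp [Smat, fromBlocks_multiply, ← fromBlocks_one]

theorem transpose_Inn : (Inn n)ᵀ = Inn n := by
  simp [Inn, fromBlocks_transpose]

theorem transpose_Smat : (Smat n)ᵀ = Smat n := by
  simp [Smat, fromBlocks_transpose]

theorem conjTranspose_Inn : (Inn n)ᴴ = Inn n := by
  simp [Inn, fromBlocks_conjTranspose]

theorem conjTranspose_Smat : (Smat n)ᴴ = Smat n := by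
  simp [Smat, fromBlocks_conjTranspose]

theorem Inn_mul_Smat : Inn n * Smat n = -(Smat n * Inn n) := by
  simp [Inn, Smat, fromBlocks_multiply, fromBlocks_neg]

theorem Jk_eq_neg_J : Jk k = -J (Fin k) ℂ := by
  simp [Jk, J, fromBlocks_neg]

theorem Jk_map_starRingEnd : (Jk k).map (starRingEnd ℂ) = Jk k := by
  simp [Jk_eq_neg_J, Matrix.map_neg]

theorem mul_Jk_mul_transpose {H : Matrix (Fin k ⊕ Fin k) (Fin k ⊕ Fin k) ℂ}
    (hH : Hᵀ * Jk k * H = Jk k) : H * Jk k * Hᵀ = Jk k := by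
  have hT : Hᵀ ∈ symplecticGroup (Fin k) ℂ := by
    rw [SymplecticGroup.mem_iff, transpose_transpose]
    simpa [Jk_eq_neg_J] using hH
  simpa [Jk_eq_neg_J] using SymplecticGroup.mem_iff.mp (SymplecticGroup.transpose_mem_iff.mp hT)

end Blocks

theorem momentOstarK_conjTranspose_mul_add (n k : ℕ) (v : Matrix (Fin n ⊕ Fin n) (Fin k) ℂ) :
    (momentOstarK n k v)ᴴ * Inn n + Inn n * momentOstarK n k v = 0 := by
  have hA : (v * vᴴ * Inn n)ᴴ * Inn n = Inn n * (v * vᴴ * Inn n) := by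
    simp only [conjTranspose_mul, conjTranspose_conjTranspose, conjTranspose_Inn,
      Matrix.mul_assoc]
  have hc : star (-(Complex.I / 2)) = Complex.I / 2 := by simp [Complex.conj_I, neg_div]
  rw [momentOstarK, conjTranspose_smul, Matrix.smul_mul, Matrix.mul_smul, hc,
    conjTranspose_sub_mul_eq_mul_sub (transpose_Inn n) (conjTranspose_Smat n) (Inn_mul_Inn n)
      (Inn_mul_Smat n) hA, ← add_smul, add_neg_cancel, zero_smul]

theorem momentOstarK_transpose_mul_add (n k : ℕ) (v : Matrix (Fin n ⊕ Fin n) (Fin k) ℂ) :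
    (momentOstarK n k v)ᵀ * Smat n + Smat n * momentOstarK n k v = 0 := by
  rw [momentOstarK, transpose_smul, Matrix.smul_mul, Matrix.mul_smul, ← smul_add,
    transpose_mul_add_mul_eq_zero (transpose_Smat n) (Smat_mul_Smat n), smul_zero]

theorem momentOstarK_mul (n k : ℕ) {g : Matrix (Fin n ⊕ Fin n) (Fin n ⊕ Fin n) ℂ}
    (hgI : gᴴ * Inn n * g = Inn n) (hgS : gᵀ * Smat n * g = Smat n)
    (v : Matrix (Fin n ⊕ Fin n) (Fin k) ℂ) :
    momentOstarK n k (g * v) = g * momentOstarK n k v * g⁻¹ := by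
  have hA : g * v * (g * v)ᴴ * Inn n = g * (v * vᴴ * Inn n) * g⁻¹ := by
    rw [inv_eq_of_mul_mul_eq_self (Inn_mul_Inn n) hgI, conjTranspose_mul]
    simp only [Matrix.mul_assoc, ← Matrix.mul_assoc (Inn n) (Inn n), Inn_mul_Inn,
      Matrix.one_mul]
  rw [momentOstarK, momentOstarK, hA,
    mul_transpose_conj_mul (transpose_Smat n) (Smat_mul_Smat n) hgS, ← Matrix.sub_mul,
    ← Matrix.mul_sub, Matrix.mul_smul, Matrix.smul_mul]

theorem momentOstarK_eq_blockMomentK (n k : ℕ) (v : Matrix (Fin n ⊕ Fin n) (Fin k) ℂ) :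
    momentOstarK n k v = blockMomentK n k (vPlusK n k v) := by
  ext (i | i) (j | j) <;>
  simp [momentOstarK, blockMomentK, vPlusK, Inn, Smat, Jk, Matrix.mul_apply, fromBlocks,
    Fintype.sum_sum_type, one_apply, mul_comm, neg_add_eq_sub, ← sub_eq_add_neg]

theorem blockMomentK_mul (n : ℕ) {k : ℕ} {H : Matrix (Fin k ⊕ Fin k) (Fin k ⊕ Fin k) ℂ}
    (hJ : Hᵀ * Jk k * H = Jk k) (hH : Hᴴ * H = 1) (M : Matrix (Fin n) (Fin k ⊕ Fin k) ℂ) :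
    blockMomentK n k (M * H) = blockMomentK n k M := by
  have hHH : H * Hᴴ = 1 := mul_eq_one_comm.mp hH
  have hHJ : H * Jk k * Hᵀ = Jk k := mul_Jk_mul_transpose k hJ
  have hHH' : H.map (starRingEnd ℂ) * Hᵀ = 1 := by
    simpa [Matrix.map_mul, conjTranspose_map_starRingEnd] using
      congrArg (map · (starRingEnd ℂ)) hHH
  have hHJ' : H.map (starRingEnd ℂ) * Jk k * Hᴴ = Jk k := by
    simpa [Matrix.map_mul, Jk_map_starRingEnd k, transpose_map_starRingEnd] using
      congrArg (map · (starRingEnd ℂ)) hHJ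
  have cancel₂ {X Y : Matrix (Fin k ⊕ Fin k) (Fin k ⊕ Fin k) ℂ} (h : X * Y = 1)
      (Z : Matrix (Fin n) (Fin k ⊕ Fin k) ℂ) : Z * X * Y = Z := by
    rw [Matrix.mul_assoc, h, Matrix.mul_one]
  have cancel₃ {X Y : Matrix (Fin k ⊕ Fin k) (Fin k ⊕ Fin k) ℂ} (h : X * Jk k * Y = Jk k)
      (Z : Matrix (Fin n) (Fin k ⊕ Fin k) ℂ) : Z * X * Jk k * Y = Z * Jk k := by
    rw [Matrix.mul_assoc _ (Jk k), Matrix.mul_assoc Z, ← Matrix.mul_assoc X, h]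
  simp only [blockMomentK, conjTranspose_mul, transpose_mul, Matrix.map_mul, ← Matrix.mul_assoc,
    cancel₂ hHH, cancel₃ hHJ, cancel₂ hHH', cancel₃ hHJ']

theorem moment_map_ostar_k_general (n k : ℕ) :
    -- (a) `μ` takes values in `o*(2n)`
    (∀ v : Matrix (Fin n ⊕ Fin n) (Fin k) ℂ,
      (momentOstarK n k v)ᴴ * Inn n + Inn n * momentOstarK n k v = 0 ∧
      (momentOstarK n k v)ᵀ * Smat n + Smat n * momentOstarK n k v = 0) ∧
    -- (b) `O*(2n)`-equivariance
    (∀ g : Matrix (Fin n ⊕ Fin n) (Fin n ⊕ Fin n) ℂ,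
      gᴴ * Inn n * g = Inn n → gᵀ * Smat n * g = Smat n →
      ∀ v : Matrix (Fin n ⊕ Fin n) (Fin k) ℂ,
        momentOstarK n k (g * v) = g * momentOstarK n k v * g⁻¹) ∧
    -- (c) block expression in terms of `v₊` and `Sp(k)`-invariance
    (∀ v : Matrix (Fin n ⊕ Fin n) (Fin k) ℂ,
      momentOstarK n k v = blockMomentK n k (vPlusK n k v)) ∧
    (∀ H : Matrix (Fin k ⊕ Fin k) (Fin k ⊕ Fin k) ℂ,
      Hᵀ * Jk k * H = Jk k → Hᴴ * H = 1 →
      ∀ v : Matrix (Fin n ⊕ Fin n) (Fin k) ℂ,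
        blockMomentK n k (vPlusK n k v * H) = blockMomentK n k (vPlusK n k v)) := by
  refine ⟨fun v => ⟨momentOstarK_conjTranspose_mul_add n k v,
      momentOstarK_transpose_mul_add n k v⟩,
    fun g hgI hgS => momentOstarK_mul n k hgI hgS, momentOstarK_eq_blockMomentK n k,
    fun H hJ hH v => blockMomentK_mul n hJ hH _⟩

theorem moment_map_ostar_k (n k : ℕ) (hn : 1 ≤ n) (hk : 1 ≤ k) :
    -- (a) `μ` takes values in `o*(2n)`
    (∀ v : Matrix (Fin n ⊕ Fin n) (Fin k) ℂ,
      (momentOstarK n k v)ᴴ * Inn n + Inn n * momentOstarK n k v = 0 ∧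
      (momentOstarK n k v)ᵀ * Smat n + Smat n * momentOstarK n k v = 0) ∧
    -- (b) `O*(2n)`-equivariance
    (∀ g : Matrix (Fin n ⊕ Fin n) (Fin n ⊕ Fin n) ℂ,
      gᴴ * Inn n * g = Inn n → gᵀ * Smat n * g = Smat n →
      ∀ v : Matrix (Fin n ⊕ Fin n) (Fin k) ℂ,
        momentOstarK n k (g * v) = g * momentOstarK n k v * g⁻¹) ∧
    -- (c) block expression in terms of `v₊` and `Sp(k)`-invariance
    (∀ v : Matrix (Fin n ⊕ Fin n) (Fin k) ℂ,
      momentOstarK n k v = blockMomentK n k (vPlusK n k v)) ∧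
    (∀ H : Matrix (Fin k ⊕ Fin k) (Fin k ⊕ Fin k) ℂ,
      Hᵀ * Jk k * H = Jk k → Hᴴ * H = 1 →
      ∀ v : Matrix (Fin n ⊕ Fin n) (Fin k) ℂ,
        blockMomentK n k (vPlusK n k v * H) = blockMomentK n k (vPlusK n k v)) :=
  moment_map_ostar_k_general n k
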